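/- arXiv:2506.03014 — 9 statements merged into one kernel-verified Lean document; each statement's English description precedes it below -/
import Mathlib

section
/- If α_j(0) ≠ 0 for some j < μ, then as t → ∞, α_j(t) converges to α_j(0)/sqrt(Σ_{k=0}^{μ-1} |α_k(0)|²) for j < μ, and α_j(t) converges to 0 for j ≥ μ. -/
open Finset Real Filter Topology

theorem ite_coeff_limit
    (N μ : ℕ) (hμ : μ < N + 1) (hμpos : 0 < μ)
    (lam : Fin (N + 1) → ℝ) (hmono : Monotone lam)
    (hground : ∀ k : Fin (N + 1), (k : ℕ) < μ → lam k = lam 0)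
    (hgap : lam 0 < lam ⟨μ, hμ⟩)
    (α0 : Fin (N + 1) → ℂ) (hnorm : ∑ k, ‖α0 k‖ ^ 2 = 1)
    (hover : ∃ j : Fin (N + 1), (j : ℕ) < μ ∧ α0 j ≠ 0)
    (α : ℝ → Fin (N + 1) → ℂ)
    (hα : ∀ t j, α t j =
      α0 j / (Real.sqrt (∑ k, ‖α0 k‖ ^ 2 * Real.exp (-2 * t * (lam k - lam j))) : ℂ)) :
    ∀ j : Fin (N + 1),
      ((j : ℕ) < μ → Tendsto (fun t => α t j) atTop
        (𝓝 (α0 j / (Real.sqrt (∑ k ∈ Finset.univ.filter fun k : Fin (N + 1) => (k : ℕ) < μ,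
            ‖α0 k‖ ^ 2) : ℂ)))) ∧
      (μ ≤ (j : ℕ) → Tendsto (fun t => α t j) atTop (𝓝 0)) := by
  obtain ⟨j0, hj0, hα0j0⟩ := hover
  have hnorm0 : 0 < ‖α0 j0‖ ^ 2 := pow_pos (norm_pos_iff.mpr hα0j0) 2
  intro j
  constructor
  · intro hj
    have hlamj : lam j = lam 0 := hground j hj
    set c : ℝ := ∑ k ∈ Finset.univ.filter fun k : Fin (N + 1) => (k : ℕ) < μ, ‖α0 k‖ ^ 2 with hc
    have hcpos : 0 < c := by
      have h1 : ‖α0 j0‖ ^ 2 ≤ c :=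
        Finset.single_le_sum (f := fun k => ‖α0 k‖ ^ 2) (fun i _ => by positivity)
          (by simp [hj0])
      linarith
    have hsum : Tendsto (fun t => ∑ k, ‖α0 k‖ ^ 2 * Real.exp (-2 * t * (lam k - lam j)))
        atTop (𝓝 c) := by
      have hceq : c = ∑ k : Fin (N + 1), if (k : ℕ) < μ then ‖α0 k‖ ^ 2 else 0 := by
        rw [hc, Finset.sum_filter]
      rw [hceq]
      apply tendsto_finset_sum
      intro k _
      by_cases hk : (k : ℕ) < μ
      · simp only [hk, if_true]
        have hz : lam k - lam j = 0 := by rw [hground k hk, hlamj]; ring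
        simp only [hz, mul_zero, Real.exp_zero, mul_one]
        exact tendsto_const_nhds
      · simp only [hk, if_false]
        have hd : 0 < lam k - lam j := by
          rw [hlamj]
          have h1 : lam ⟨μ, hμ⟩ ≤ lam k := hmono (by simpa [Fin.le_def] using Nat.le_of_not_lt hk)
          linarith
        have hexp : Tendsto (fun t => Real.exp (-2 * t * (lam k - lam j))) atTop (𝓝 0) := by
          apply Real.tendsto_exp_atBot.comp
          have heq : (fun t : ℝ => -2 * t * (lam k - lam j))
              = fun t => (-2 * (lam k - lam j)) * t := by funext t; ring
          rw [heq]
          exact Tendsto.const_mul_atTop_of_neg (by linarith) tendsto_id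
        have := hexp.const_mul (‖α0 k‖ ^ 2)
        simpa using this
    have hsqrt : Tendsto
        (fun t => Real.sqrt (∑ k, ‖α0 k‖ ^ 2 * Real.exp (-2 * t * (lam k - lam j))))
        atTop (𝓝 (Real.sqrt c)) := (Real.continuous_sqrt.tendsto c).comp hsum
    have hC : Tendsto
        (fun t => ((Real.sqrt (∑ k, ‖α0 k‖ ^ 2 * Real.exp (-2 * t * (lam k - lam j))) : ℝ) : ℂ))
        atTop (𝓝 ((Real.sqrt c : ℝ) : ℂ)) := (Complex.continuous_ofReal.tendsto _).comp hsqrt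
    have hne : ((Real.sqrt c : ℝ) : ℂ) ≠ 0 :=
      Complex.ofReal_ne_zero.mpr (ne_of_gt (Real.sqrt_pos.mpr hcpos))
    have hfin := Tendsto.div (tendsto_const_nhds (x := α0 j)) hC hne
    simp only [hα]
    exact hfin
  · intro hj
    have hd : lam 0 < lam j :=
      lt_of_lt_of_le hgap (hmono (by simpa [Fin.le_def] using hj))
    have hterm : Tendsto (fun t => ‖α0 j0‖ ^ 2 * Real.exp (-2 * t * (lam j0 - lam j)))
        atTop atTop := by
      apply Tendsto.const_mul_atTop hnorm0
      apply Real.tendsto_exp_atTop.comp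
      have heq : (fun t : ℝ => -2 * t * (lam j0 - lam j))
          = fun t => (2 * (lam j - lam j0)) * t := by funext t; ring
      rw [heq]
      have h0 : lam j0 = lam 0 := hground j0 hj0
      exact Tendsto.const_mul_atTop (by rw [h0]; linarith) tendsto_id
    have hsum : Tendsto (fun t => ∑ k, ‖α0 k‖ ^ 2 * Real.exp (-2 * t * (lam k - lam j)))
        atTop atTop := by
      apply tendsto_atTop_mono _ hterm
      intro t
      exact Finset.single_le_sum (f := fun k => ‖α0 k‖ ^ 2 * Real.exp (-2 * t * (lam k - lam j))) (fun i _ => by positivity) (Finset.mem_univ j0)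
    have hsqrt : Tendsto
        (fun t => Real.sqrt (∑ k, ‖α0 k‖ ^ 2 * Real.exp (-2 * t * (lam k - lam j))))
        atTop atTop := by
      refine (tendsto_atTop_atTop_of_monotone (fun a b hab => Real.sqrt_le_sqrt hab) ?_).comp hsum
      intro b
      exact ⟨b ^ 2, by rw [Real.sqrt_sq_eq_abs]; exact le_abs_self b⟩
    have hinv : Tendsto
        (fun t => (Real.sqrt (∑ k, ‖α0 k‖ ^ 2 * Real.exp (-2 * t * (lam k - lam j))))⁻¹)
        atTop (𝓝 0) := tendsto_inv_atTop_zero.comp hsqrt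
    have hinvC : Tendsto
        (fun t => (((Real.sqrt (∑ k, ‖α0 k‖ ^ 2 * Real.exp (-2 * t * (lam k - lam j))))⁻¹ : ℝ) : ℂ))
        atTop (𝓝 0) := by
      have := (Complex.continuous_ofReal.tendsto 0).comp hinv
      simpa [Function.comp_def] using this
    have hmul := hinvC.const_mul (α0 j)
    simp only [mul_zero] at hmul
    simp only [hα]
    simpa [div_eq_mul_inv, Complex.ofReal_inv] using hmul
end

section
/- For each j < μ, the function t ↦ |α_j(t)| is monotonically non-decreasing on [0, ∞). -/
open Finset Real

theorem ite_ground_amplitude_monotone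
    (N μ : ℕ) (hμ : μ < N + 1) (hμpos : 0 < μ)
    (lam : Fin (N + 1) → ℝ) (hmono : Monotone lam)
    (hground : ∀ k : Fin (N + 1), (k : ℕ) < μ → lam k = lam 0)
    (hgap : lam 0 < lam ⟨μ, hμ⟩)
    (α0 : Fin (N + 1) → ℂ) (hnorm : ∑ k, ‖α0 k‖ ^ 2 = 1)
    (hover : 0 < ∑ k ∈ Finset.univ.filter fun k : Fin (N + 1) => (k : ℕ) < μ, ‖α0 k‖ ^ 2)
    (α : ℝ → Fin (N + 1) → ℂ)
    (hα : ∀ t j, α t j =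
      α0 j / (Real.sqrt (∑ k, ‖α0 k‖ ^ 2 * Real.exp (-2 * t * (lam k - lam j))) : ℂ)) :
    ∀ j : Fin (N + 1), (j : ℕ) < μ →
      MonotoneOn (fun t => ‖α t j‖) (Set.Ici (0 : ℝ)) := by
  intro j hj
  set S : ℝ → ℝ := fun t => ∑ k, ‖α0 k‖ ^ 2 * Real.exp (-2 * t * (lam k - lam j))
  have hj0 : lam j = lam 0 := hground j hj
  have hdk : ∀ k : Fin (N + 1), 0 ≤ lam k - lam j := by
    intro k
    have : lam 0 ≤ lam k := hmono (Fin.zero_le k)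
    rw [hj0]; linarith
  have hSpos : ∀ t : ℝ, 0 < S t := by
    intro t
    refine lt_of_lt_of_le hover ?_
    have hterm : ∀ k ∈ Finset.univ.filter fun k : Fin (N + 1) => (k : ℕ) < μ,
        ‖α0 k‖ ^ 2 = ‖α0 k‖ ^ 2 * Real.exp (-2 * t * (lam k - lam j)) := by
      intro k hk
      simp only [mem_filter] at hk
      have : lam k = lam j := by rw [hground k hk.2, hj0]
      rw [this]
      simp
    rw [Finset.sum_congr rfl hterm]
    refine Finset.sum_le_sum_of_subset_of_nonneg (Finset.subset_univ _) ?_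
    intro k _ _
    positivity
  have hSanti : ∀ s t : ℝ, s ≤ t → S t ≤ S s := by
    intro s t hst
    refine Finset.sum_le_sum fun k _ => ?_
    have h1 : -2 * t * (lam k - lam j) ≤ -2 * s * (lam k - lam j) := by
      have := hdk k; nlinarith
    have := Real.exp_le_exp.mpr h1
    nlinarith [sq_nonneg ‖α0 k‖, Real.exp_pos (-2 * t * (lam k - lam j))]
  intro s hs t ht hst
  simp only [hα]
  have hnormeq : ∀ u : ℝ, ‖α0 j / (Real.sqrt (S u) : ℂ)‖ = ‖α0 j‖ / Real.sqrt (S u) := by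
    intro u
    rw [norm_div, Complex.norm_real, Real.norm_eq_abs, abs_of_nonneg (Real.sqrt_nonneg _)]
  rw [hnormeq s, hnormeq t]
  have h1 : Real.sqrt (S t) ≤ Real.sqrt (S s) := Real.sqrt_le_sqrt (hSanti s t hst)
  have h2 : 0 < Real.sqrt (S t) := Real.sqrt_pos.mpr (hSpos t)
  exact div_le_div_of_nonneg_left (norm_nonneg _) h2 h1
end

section
/- For all t ≥ 0 and all j ≥ μ, the amplitude satisfies |α_j(t)|² ≤ |α_j(0)|² · (Σ_{k=0}^{μ-1} |α_k(0)|²)^{-1} · e^{-2tΔ}, where Δ = λ_μ - λ_0. -/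
open Finset Real

theorem ite_amplitude_suppression
    (N μ : ℕ) (hμ : μ < N + 1) (hμpos : 0 < μ)
    (lam : Fin (N + 1) → ℝ) (hmono : Monotone lam)
    (hground : ∀ k : Fin (N + 1), (k : ℕ) < μ → lam k = lam 0)
    (Δ : ℝ) (hΔ : Δ = lam ⟨μ, hμ⟩ - lam 0) (hΔpos : 0 < Δ)
    (α0 : Fin (N + 1) → ℂ) (hnorm : ∑ k, ‖α0 k‖ ^ 2 = 1)
    (a : ℝ) (ha : a = ∑ k ∈ Finset.univ.filter fun k : Fin (N + 1) => (k : ℕ) < μ, ‖α0 k‖ ^ 2)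
    (hapos : 0 < a)
    (α : ℝ → Fin (N + 1) → ℂ)
    (hα : ∀ t j, α t j =
      α0 j / (Real.sqrt (∑ k, ‖α0 k‖ ^ 2 * Real.exp (-2 * t * (lam k - lam j))) : ℂ)) :
    ∀ t ≥ (0 : ℝ), ∀ j : Fin (N + 1), μ ≤ (j : ℕ) →
      ‖α t j‖ ^ 2 ≤ ‖α0 j‖ ^ 2 * a⁻¹ * Real.exp (-2 * t * Δ) := by
  intro t ht j hj
  set S : ℝ := ∑ k, ‖α0 k‖ ^ 2 * Real.exp (-2 * t * (lam k - lam j)) with hS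
  have hΔj : Δ ≤ lam j - lam 0 := by
    rw [hΔ]
    have : lam ⟨μ, hμ⟩ ≤ lam j := hmono (by simpa [Fin.le_def] using hj)
    linarith
  have hkey : a * Real.exp (2 * t * Δ) ≤ S := by
    have h1 : a * Real.exp (2 * t * Δ) ≤
        ∑ k ∈ Finset.univ.filter fun k : Fin (N + 1) => (k : ℕ) < μ,
          ‖α0 k‖ ^ 2 * Real.exp (-2 * t * (lam k - lam j)) := by
      rw [ha, Finset.sum_mul]
      apply Finset.sum_le_sum
      intro k hk
      have hk' : (k : ℕ) < μ := (Finset.mem_filter.mp hk).2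
      rw [hground k hk']
      have : Real.exp (2 * t * Δ) ≤ Real.exp (-2 * t * (lam 0 - lam j)) := by
        apply Real.exp_le_exp.mpr
        nlinarith
      nlinarith [sq_nonneg ‖α0 k‖, Real.exp_pos (2 * t * Δ)]
    refine h1.trans ?_
    apply Finset.sum_le_sum_of_subset_of_nonneg (Finset.filter_subset _ _)
    intro k _ _
    positivity
  have hSpos : 0 < S := lt_of_lt_of_le (by positivity) hkey
  have hnormval : ‖α t j‖ ^ 2 = ‖α0 j‖ ^ 2 / S := by
    rw [hα, norm_div, Complex.norm_real, Real.norm_eq_abs,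
      abs_of_nonneg (Real.sqrt_nonneg _), div_pow, Real.sq_sqrt hSpos.le]
  rw [hnormval]
  have e1 : ‖α0 j‖ ^ 2 / S ≤ ‖α0 j‖ ^ 2 / (a * Real.exp (2 * t * Δ)) := by
    apply div_le_div_of_nonneg_left (by positivity) (by positivity) hkey
  refine e1.trans_eq ?_
  have he : Real.exp (-2 * t * Δ) = (Real.exp (2 * t * Δ))⁻¹ := by
    rw [← Real.exp_neg]; ring_nf
  rw [he, div_eq_mul_inv, mul_inv]; ring
end

section
/- The ground-space fidelity f(t) = Σ_{j=0}^{μ-1} |α_j(t)|² satisfies f(t) ≥ 1/(1 + f(0)^{-1} e^{-2tΔ}) for all t ≥ 0, where Δ = λ_μ - λ_0. -/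
open Finset Real

theorem ite_fidelity_lower_bound
    (N μ : ℕ) (hμ : μ < N + 1) (hμpos : 0 < μ)
    (lam : Fin (N + 1) → ℝ) (hmono : Monotone lam)
    (hground : ∀ k : Fin (N + 1), (k : ℕ) < μ → lam k = lam 0)
    (Δ : ℝ) (hΔ : Δ = lam ⟨μ, hμ⟩ - lam 0) (hΔpos : 0 < Δ)
    (α0 : Fin (N + 1) → ℂ) (hnorm : ∑ k, ‖α0 k‖ ^ 2 = 1)
    (α : ℝ → Fin (N + 1) → ℂ)
    (hα : ∀ t j, α t j =
      α0 j / (Real.sqrt (∑ k, ‖α0 k‖ ^ 2 * Real.exp (-2 * t * (lam k - lam j))) : ℂ))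
    (f : ℝ → ℝ)
    (hf : ∀ t, f t = ∑ j ∈ Finset.univ.filter fun j : Fin (N + 1) => (j : ℕ) < μ, ‖α t j‖ ^ 2)
    (hf0 : 0 < f 0) :
    ∀ t ≥ (0 : ℝ), f t ≥ 1 / (1 + (f 0)⁻¹ * Real.exp (-2 * t * Δ)) := by
  intro t ht
  set a : Fin (N + 1) → ℝ := fun k => ‖α0 k‖ ^ 2 with ha
  have hapos : ∀ k, 0 ≤ a k := fun k => sq_nonneg _
  set G := Finset.univ.filter fun j : Fin (N + 1) => (j : ℕ) < μ with hG
  set S : ℝ → ℝ := fun s => ∑ k, a k * Real.exp (-2 * s * (lam k - lam 0)) with hS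
  have hSterm : ∀ s : ℝ, ∀ k ∈ G, a k * Real.exp (-2 * s * (lam k - lam 0)) = a k := by
    intro s k hk
    simp only [hG, mem_filter] at hk
    rw [hground k hk.2]
    simp
  have hf0eq : f 0 = ∑ j ∈ G, a j := by
    rw [hf]
    apply Finset.sum_congr rfl
    intro j hj
    rw [hα]
    have h1 : ∀ k : Fin (N + 1),
        ‖α0 k‖ ^ 2 * Real.exp (-2 * 0 * (lam k - lam j)) = ‖α0 k‖ ^ 2 := by
      intro k; norm_num
    rw [Finset.sum_congr rfl (fun k _ => h1 k), hnorm]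
    simp [ha]
  have hSpos : ∀ s : ℝ, 0 < S s := by
    intro s
    have h1 : f 0 ≤ S s := by
      rw [hf0eq, hS]
      calc ∑ j ∈ G, a j
          = ∑ j ∈ G, a j * Real.exp (-2 * s * (lam j - lam 0)) :=
            (Finset.sum_congr rfl (hSterm s)).symm
        _ ≤ ∑ k, a k * Real.exp (-2 * s * (lam k - lam 0)) :=
            Finset.sum_le_sum_of_subset_of_nonneg (Finset.subset_univ G)
              (fun k _ _ => by positivity)
    linarith
  have hnormα : ∀ j ∈ G, ‖α t j‖ ^ 2 = a j / S t := by
    intro j hj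
    simp only [hG, mem_filter] at hj
    rw [hα]
    have hsum : (∑ k, ‖α0 k‖ ^ 2 * Real.exp (-2 * t * (lam k - lam j))) = S t := by
      rw [hS]
      apply Finset.sum_congr rfl
      intro k _
      rw [hground j hj.2]
    rw [hsum, norm_div]
    have h1 : ‖(Real.sqrt (S t) : ℂ)‖ = Real.sqrt (S t) := by
      rw [Complex.norm_real, Real.norm_eq_abs, abs_of_nonneg (Real.sqrt_nonneg _)]
    rw [h1, div_pow, Real.sq_sqrt (hSpos t).le]
  have hft : f t = f 0 / S t := by
    rw [hf, hf0eq, Finset.sum_div]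
    exact Finset.sum_congr rfl hnormα
  have hE : 0 < Real.exp (-2 * t * Δ) := Real.exp_pos _
  have hSbound : S t ≤ f 0 + Real.exp (-2 * t * Δ) := by
    have hSt : S t = ∑ k, a k * Real.exp (-2 * t * (lam k - lam 0)) := rfl
    rw [hSt, ← Finset.sum_filter_add_sum_filter_not Finset.univ
      (fun j : Fin (N + 1) => (j : ℕ) < μ)]
    have hGsum : ∑ k ∈ G, a k * Real.exp (-2 * t * (lam k - lam 0)) = f 0 := by
      rw [hf0eq]; exact Finset.sum_congr rfl (hSterm t)
    rw [hGsum]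
    have hrest : ∑ k ∈ Finset.univ.filter (fun j : Fin (N + 1) => ¬ (j : ℕ) < μ),
        a k * Real.exp (-2 * t * (lam k - lam 0)) ≤ Real.exp (-2 * t * Δ) := by
      have hstep : ∑ k ∈ Finset.univ.filter (fun j : Fin (N + 1) => ¬ (j : ℕ) < μ),
          a k * Real.exp (-2 * t * (lam k - lam 0)) ≤
          ∑ k ∈ Finset.univ.filter (fun j : Fin (N + 1) => ¬ (j : ℕ) < μ),
          a k * Real.exp (-2 * t * Δ) := by
        apply Finset.sum_le_sum
        intro k hk
        simp only [mem_filter, not_lt] at hk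
        have hlam : lam ⟨μ, hμ⟩ ≤ lam k := hmono (by simpa [Fin.le_def] using hk.2)
        have hΔle : Δ ≤ lam k - lam 0 := by rw [hΔ]; linarith
        have hexp : Real.exp (-2 * t * (lam k - lam 0)) ≤ Real.exp (-2 * t * Δ) := by
          apply Real.exp_le_exp.2
          nlinarith
        exact mul_le_mul_of_nonneg_left hexp (hapos k)
      refine hstep.trans ?_
      rw [← Finset.sum_mul]
      have hsumle : ∑ k ∈ Finset.univ.filter (fun j : Fin (N + 1) => ¬ (j : ℕ) < μ),
          a k ≤ 1 := by
        rw [← hnorm]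
        exact Finset.sum_le_sum_of_subset_of_nonneg (Finset.subset_univ _)
          (fun k _ _ => hapos k)
      nlinarith
    linarith
  rw [hft, ge_iff_le]
  have hrhs : 1 / (1 + (f 0)⁻¹ * Real.exp (-2 * t * Δ)) =
      f 0 / (f 0 + Real.exp (-2 * t * Δ)) := by
    field_simp
  rw [hrhs]
  apply div_le_div_of_nonneg_left hf0.le (hSpos t) hSbound
end

section
/- Given a target fidelity f ∈ (f(0), 1), the fidelity f(t) ≥ f holds for all t ≥ (ln f - ln(1-f) - ln f(0)) / (2Δ). -/
open Finset Real

theorem ite_fidelity_threshold_time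
    (N μ : ℕ) (hμ : μ < N + 1) (hμpos : 0 < μ)
    (lam : Fin (N + 1) → ℝ) (hmono : Monotone lam)
    (hground : ∀ k : Fin (N + 1), (k : ℕ) < μ → lam k = lam 0)
    (Δ : ℝ) (hΔ : Δ = lam ⟨μ, hμ⟩ - lam 0) (hΔpos : 0 < Δ)
    (α0 : Fin (N + 1) → ℂ) (hnorm : ∑ k, ‖α0 k‖ ^ 2 = 1)
    (α : ℝ → Fin (N + 1) → ℂ)
    (hα : ∀ t j, α t j =
      α0 j / (Real.sqrt (∑ k, ‖α0 k‖ ^ 2 * Real.exp (-2 * t * (lam k - lam j))) : ℂ))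
    (f : ℝ → ℝ)
    (hf : ∀ t, f t = ∑ j ∈ Finset.univ.filter fun j : Fin (N + 1) => (j : ℕ) < μ, ‖α t j‖ ^ 2)
    (hf0 : 0 < f 0)
    (ftgt : ℝ) (hftgt : f 0 < ftgt) (hftgt1 : ftgt < 1) :
    ∀ t : ℝ, t ≥ (Real.log ftgt - Real.log (1 - ftgt) - Real.log (f 0)) / (2 * Δ) →
      f t ≥ ftgt := by
  intro t ht
  have hft : 0 < ftgt := lt_trans hf0 hftgt
  have h1ft : 0 < 1 - ftgt := by linarith
  -- f 0 equals sum of initial amplitudes over ground space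
  have hα0norm : ∀ j, α 0 j = α0 j := by
    intro j
    rw [hα]
    have h1 : (∑ k, ‖α0 k‖ ^ 2 * Real.exp (-2 * (0:ℝ) * (lam k - lam j))) = 1 := by
      simp only [neg_mul, zero_mul, mul_zero, neg_zero, Real.exp_zero, mul_one]
      exact hnorm
    rw [h1]
    simp
  have hf0eq : f 0 = ∑ j ∈ Finset.univ.filter fun j : Fin (N + 1) => (j : ℕ) < μ, ‖α0 j‖ ^ 2 := by
    rw [hf]
    exact Finset.sum_congr rfl fun j _ => by rw [hα0norm]
  -- positivity of threshold time and hence of t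
  have htstar : 0 < (Real.log ftgt - Real.log (1 - ftgt) - Real.log (f 0)) / (2 * Δ) := by
    apply div_pos _ (by linarith)
    have h1 : Real.log (f 0) < Real.log ftgt := Real.log_lt_log hf0 hftgt
    have h2 : Real.log (1 - ftgt) < 0 := Real.log_neg h1ft (by linarith)
    linarith
  have ht0 : 0 < t := lt_of_lt_of_le htstar ht
  set D := ∑ k, ‖α0 k‖ ^ 2 * Real.exp (-2 * t * (lam k - lam 0)) with hD
  have hterm_nonneg : ∀ k : Fin (N+1), 0 ≤ ‖α0 k‖ ^ 2 * Real.exp (-2 * t * (lam k - lam 0)) :=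
    fun k => mul_nonneg (by positivity) (Real.exp_pos _).le
  -- split D
  have hsplit := Finset.sum_filter_add_sum_filter_not Finset.univ
    (fun j : Fin (N + 1) => (j : ℕ) < μ)
    (fun k => ‖α0 k‖ ^ 2 * Real.exp (-2 * t * (lam k - lam 0)))
  have hSsum : (∑ j ∈ Finset.univ.filter fun j : Fin (N + 1) => (j : ℕ) < μ,
      ‖α0 j‖ ^ 2 * Real.exp (-2 * t * (lam j - lam 0))) = f 0 := by
    rw [hf0eq]
    apply Finset.sum_congr rfl
    intro j hj
    rw [hground j (Finset.mem_filter.mp hj).2]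
    simp
  have hcompl_sum : (∑ j ∈ Finset.univ.filter fun j : Fin (N + 1) => ¬ (j : ℕ) < μ,
      ‖α0 j‖ ^ 2) = 1 - f 0 := by
    have := Finset.sum_filter_add_sum_filter_not Finset.univ
      (fun j : Fin (N + 1) => (j : ℕ) < μ) (fun k => ‖α0 k‖ ^ 2)
    rw [hnorm] at this
    rw [hf0eq]
    linarith
  have hDpos : 0 < D := by
    rw [hD, ← hsplit, hSsum]
    have : (0:ℝ) ≤ ∑ j ∈ Finset.univ.filter fun j : Fin (N + 1) => ¬ (j : ℕ) < μ,
        ‖α0 j‖ ^ 2 * Real.exp (-2 * t * (lam j - lam 0)) :=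
      Finset.sum_nonneg fun k _ => hterm_nonneg k
    linarith
  -- compute f t = f 0 / D
  have hftD : f t = f 0 / D := by
    rw [hf]
    have hstep : ∀ j ∈ Finset.univ.filter fun j : Fin (N + 1) => (j : ℕ) < μ,
        ‖α t j‖ ^ 2 = ‖α0 j‖ ^ 2 / D := by
      intro j hj
      have hlj : lam j = lam 0 := hground j (Finset.mem_filter.mp hj).2
      have hden : (∑ k, ‖α0 k‖ ^ 2 * Real.exp (-2 * t * (lam k - lam j))) = D := by
        rw [hD, hlj]
      rw [hα, hden, norm_div, div_pow, Complex.norm_real, Real.norm_eq_abs,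
        abs_of_nonneg (Real.sqrt_nonneg D), Real.sq_sqrt hDpos.le]
    rw [Finset.sum_congr rfl hstep, ← Finset.sum_div, ← hf0eq]
  -- bound the bad part: each exp factor ≤ exp(-2 t Δ)
  have hbad : (∑ j ∈ Finset.univ.filter fun j : Fin (N + 1) => ¬ (j : ℕ) < μ,
      ‖α0 j‖ ^ 2 * Real.exp (-2 * t * (lam j - lam 0)))
      ≤ (1 - f 0) * Real.exp (-2 * t * Δ) := by
    rw [← hcompl_sum, Finset.sum_mul]
    apply Finset.sum_le_sum
    intro k hk
    have hkμ : μ ≤ (k : ℕ) := Nat.le_of_not_lt (Finset.mem_filter.mp hk).2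
    have hle : lam ⟨μ, hμ⟩ ≤ lam k := hmono (by exact hkμ)
    have hgap : Δ ≤ lam k - lam 0 := by rw [hΔ]; linarith
    apply mul_le_mul_of_nonneg_left _ (by positivity)
    apply Real.exp_le_exp.mpr
    nlinarith
  have hDle : D ≤ f 0 + (1 - f 0) * Real.exp (-2 * t * Δ) := by
    rw [hD, ← hsplit, hSsum]
    linarith
  -- bound the exponential using t ≥ t*
  have hexp : Real.exp (-2 * t * Δ) ≤ (1 - ftgt) * f 0 / ftgt := by
    have h1 : -2 * t * Δ ≤ -(Real.log ftgt - Real.log (1 - ftgt) - Real.log (f 0)) := by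
      have := (div_le_iff₀ (by linarith : (0:ℝ) < 2 * Δ)).mp ht
      nlinarith
    calc Real.exp (-2 * t * Δ)
        ≤ Real.exp (-(Real.log ftgt - Real.log (1 - ftgt) - Real.log (f 0))) :=
          Real.exp_le_exp.mpr h1
      _ = (1 - ftgt) * f 0 / ftgt := by
          rw [show -(Real.log ftgt - Real.log (1 - ftgt) - Real.log (f 0))
              = Real.log (1 - ftgt) + Real.log (f 0) - Real.log ftgt by ring,
            Real.exp_sub, Real.exp_add, Real.exp_log h1ft, Real.exp_log hf0, Real.exp_log hft]
  -- combine
  have hf01 : f 0 < 1 := lt_trans hftgt hftgt1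
  have hDle2 : D ≤ f 0 / ftgt := by
    have h2 : (1 - f 0) * Real.exp (-2 * t * Δ) ≤ (1 - ftgt) * f 0 / ftgt := by
      calc (1 - f 0) * Real.exp (-2 * t * Δ)
          ≤ 1 * ((1 - ftgt) * f 0 / ftgt) := by
            apply mul_le_mul (by linarith) hexp (Real.exp_pos _).le zero_le_one
        _ = (1 - ftgt) * f 0 / ftgt := one_mul _
    have h3 : f 0 + (1 - ftgt) * f 0 / ftgt = f 0 / ftgt := by
      field_simp; ring
    linarith
  rw [hftD, ge_iff_le, le_div_iff₀ hDpos]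
  calc ftgt * D ≤ ftgt * (f 0 / ftgt) := by
        apply mul_le_mul_of_nonneg_left hDle2 hft.le
    _ = f 0 := by field_simp
end

section
/- If all initial amplitudes are equal, α_j(0) = 2^{-Q/2} for all j, then the success probability p(t) = Σ_{j<μ} |α_j(t)|² satisfies p(t) ≥ 1/(1 + 2^Q μ^{-1} e^{-2tΔ}) for all t ≥ 0. -/
/-!
With equal initial amplitudes, `|α_j(t)|²` is the reciprocal of
`Z_j(t) = Σ_k e^{-2t(λ_k - λ_j)}`, and all `μ` ground states share the same `Z = Z_0(t)`, so
`p(t) = μ / Z`. In `Z` each ground state contributes `1` and each excited state at most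
`e^{-2tΔ}`, hence `Z ≤ μ + 2^Q e^{-2tΔ}`.
-/

open Finset Real

lemma sq_rpow_neg_div_two {x : ℝ} (hx : 0 < x) (n : ℕ) : (x ^ (-(n : ℝ) / 2)) ^ 2 = (x ^ n)⁻¹ := by
  rw [← rpow_mul_natCast hx.le, show -(n : ℝ) / 2 * ((2 : ℕ) : ℝ) = -n by push_cast; ring,
    rpow_neg hx.le, rpow_natCast]

lemma one_div_one_add_inv_mul_le_div {m T N E : ℝ} (hm : 0 < m) (hT : 0 < T)
    (hle : T ≤ m + N * E) : 1 / (1 + N * m⁻¹ * E) ≤ m / T := by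
  have hpos : 0 < m + N * E := hT.trans_le hle
  rw [show 1 / (1 + N * m⁻¹ * E) = m / (m + N * E) by field_simp]
  gcongr

section ImaginaryTimeEvolution

variable {ι : Type*} [Fintype ι] (lam : ι → ℝ) (t : ℝ)

noncomputable def evolvedAmplitude (a : ι → ℂ) (j : ι) : ℂ :=
  a j / (sqrt (∑ k, ‖a k‖ ^ 2 * exp (-2 * t * (lam k - lam j))) : ℂ)

noncomputable def relPartitionSum (j : ι) : ℝ :=
  ∑ k, exp (-2 * t * (lam k - lam j))

lemma relPartitionSum_pos [Nonempty ι] (j : ι) : 0 < relPartitionSum lam t j :=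
  sum_pos (fun _ _ => exp_pos _) univ_nonempty

lemma relPartitionSum_congr {i j : ι} (h : lam i = lam j) :
    relPartitionSum lam t i = relPartitionSum lam t j := by
  simp only [relPartitionSum, h]

lemma norm_sq_evolvedAmplitude_of_norm_sq_eq {a : ι → ℂ} {c : ℝ} (hc : 0 < c)
    (ha : ∀ k, ‖a k‖ ^ 2 = c) (j : ι) :
    ‖evolvedAmplitude lam t a j‖ ^ 2 = (relPartitionSum lam t j)⁻¹ := by
  have : Nonempty ι := ⟨j⟩
  have hZ := relPartitionSum_pos lam t j
  simp only [evolvedAmplitude, ha, ← mul_sum]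
  rw [norm_div, Complex.norm_real, norm_of_nonneg (sqrt_nonneg _), div_pow,
    sq_sqrt (by positivity), ha j]
  exact div_mul_cancel_left₀ hc.ne' _

lemma sum_inv_relPartitionSum_of_lam_eq (s : Finset ι) {j : ι} (hs : ∀ k ∈ s, lam k = lam j) :
    ∑ k ∈ s, (relPartitionSum lam t k)⁻¹ = #s / relPartitionSum lam t j := by
  rw [sum_congr rfl fun k hk => by rw [relPartitionSum_congr lam t (hs k hk)], sum_const,
    nsmul_eq_mul, div_eq_mul_inv]

lemma relPartitionSum_le_of_gap [DecidableEq ι] (s : Finset ι) {j : ι} {Δ : ℝ} (ht : 0 ≤ t)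
    (hs : ∀ k ∈ s, lam k = lam j) (hgap : ∀ k ∉ s, lam j + Δ ≤ lam k) :
    relPartitionSum lam t j ≤ #s + #sᶜ * exp (-2 * t * Δ) := by
  rw [relPartitionSum, ← sum_add_sum_compl s]
  gcongr ?_ + ?_
  · rw [sum_congr rfl fun k hk => by rw [hs k hk, sub_self, mul_zero, exp_zero]]
    simp
  · rw [← nsmul_eq_mul, ← sum_const]
    refine sum_le_sum fun k hk => exp_le_exp.2 ?_
    nlinarith [hgap k (mem_compl.1 hk)]

end ImaginaryTimeEvolution

theorem ite_combinatorial_success_probability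
    (Q μ : ℕ) (hμ : μ < 2 ^ Q) (hμpos : 0 < μ)
    (lam : Fin (2 ^ Q) → ℝ) (hmono : Monotone lam)
    (hground : ∀ k : Fin (2 ^ Q), (k : ℕ) < μ → lam k = lam ⟨0, (Nat.pow_pos (by norm_num) : 0 < 2 ^ Q)⟩)
    (Δ : ℝ) (hΔ : Δ = lam ⟨μ, hμ⟩ - lam ⟨0, (Nat.pow_pos (by norm_num) : 0 < 2 ^ Q)⟩)
    (α0 : Fin (2 ^ Q) → ℂ)
    (hα0 : ∀ j, α0 j = ((2 : ℝ) ^ (-(Q : ℝ) / 2) : ℝ))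
    (α : ℝ → Fin (2 ^ Q) → ℂ)
    (hα : ∀ t j, α t j =
      α0 j / (Real.sqrt (∑ k, ‖α0 k‖ ^ 2 * Real.exp (-2 * t * (lam k - lam j))) : ℂ))
    (p : ℝ → ℝ)
    (hp : ∀ t, p t = ∑ j ∈ Finset.univ.filter fun j : Fin (2 ^ Q) => (j : ℕ) < μ, ‖α t j‖ ^ 2) :
    ∀ t ≥ (0 : ℝ), p t ≥ 1 / (1 + 2 ^ Q * (μ : ℝ)⁻¹ * Real.exp (-2 * t * Δ)) := by
  intro t ht
  set s := univ.filter fun j : Fin (2 ^ Q) => (j : ℕ) < μ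
  have hcard : #s = μ := by rw [Fin.card_filter_val_lt, min_eq_right hμ.le]
  have hs : ∀ k ∈ s, lam k = lam ⟨0, _⟩ := fun k hk => hground k (mem_filter.1 hk).2
  have hgap : ∀ k ∉ s, lam ⟨0, _⟩ + Δ ≤ lam k := fun k hk => by
    have hμk : (⟨μ, hμ⟩ : Fin (2 ^ Q)) ≤ k := Fin.le_def.2 (by simpa [s] using hk)
    linarith [hmono hμk]
  have hα0_norm : ∀ k, ‖α0 k‖ ^ 2 = ((2 : ℝ) ^ Q)⁻¹ := fun k => by
    rw [hα0, Complex.norm_real, norm_of_nonneg (rpow_nonneg zero_le_two _),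
      sq_rpow_neg_div_two two_pos]
  have hα_norm : ∀ j, ‖α t j‖ ^ 2 = (relPartitionSum lam t j)⁻¹ := fun j => by
    rw [hα]
    exact norm_sq_evolvedAmplitude_of_norm_sq_eq lam t (by positivity) hα0_norm j
  have hZ := relPartitionSum_le_of_gap lam t s ht hs hgap
  rw [hp, ge_iff_le, sum_congr rfl fun j _ => hα_norm j,
    sum_inv_relPartitionSum_of_lam_eq lam t s hs, hcard]
  refine one_div_one_add_inv_mul_le_div (by exact_mod_cast hμpos)
    (relPartitionSum_pos lam t _) (hZ.trans ?_)
  rw [hcard]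
  gcongr
  exact_mod_cast (card_le_univ sᶜ).trans (Fintype.card_fin _).le
end

section
/- With equal-superposition initial state, for any threshold ε ∈ (0,1), the success probability p(t) ≥ ε holds whenever t ≥ (Q ln 2 - ln μ + ln ε - ln(1-ε)) / (2Δ). -/
/-!
Starting from the uniform superposition, imaginary-time evolution gives every level `j` the
weight `|α_j(t)|² = 1 / Σ_k e^{-2t(λ_k - λ_j)}`, so the `μ` degenerate ground levels share one
denominator `Z(t)`. Each excited level contributes at most `e^{-2tΔ}` to `Z(t)` once `t ≥ 0`, so
`p(t) ≥ μ / (μ + (2^Q - μ) e^{-2tΔ})`, and past the stated time `e^{-2tΔ} ≤ μ(1-ε) / (2^Q ε)`,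
which makes this lower bound at least `ε`.
-/

open Finset Real

noncomputable def thresholdTime (N m ε Δ : ℝ) : ℝ :=
  (log N - log m + log ε - log (1 - ε)) / (2 * Δ)

lemma thresholdTime_pos {N m ε Δ : ℝ} (hN : 0 < N) (hm : 0 < m) (hε1 : ε < 1)
    (hmN : m / N < ε) (hΔ : 0 < Δ) : 0 < thresholdTime N m ε Δ := by
  have hlog : log m - log N < log ε := by
    rw [← log_div hm.ne' hN.ne']
    exact log_lt_log (by positivity) hmN
  have hlog_one_sub : log (1 - ε) < 0 := log_neg (by linarith) (by linarith [div_pos hm hN])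
  unfold thresholdTime
  exact div_pos (by linarith) (by positivity)

lemma le_div_add_mul_exp_of_thresholdTime_le {N m n ε Δ t : ℝ} (hN : 0 < N) (hm : 0 < m)
    (hn : 0 ≤ n) (hnN : n ≤ N) (hε0 : 0 < ε) (hε1 : ε < 1) (hΔ : 0 < Δ)
    (ht : thresholdTime N m ε Δ ≤ t) : ε ≤ m / (m + n * exp (-2 * t * Δ)) := by
  have h1ε : 0 < 1 - ε := by linarith
  have hexp : exp (-2 * t * Δ) ≤ m * (1 - ε) / (N * ε) := by
    rw [← exp_log (by positivity : 0 < m * (1 - ε) / (N * ε)), exp_le_exp,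
      log_div (by positivity) (by positivity), log_mul hm.ne' h1ε.ne',
      log_mul hN.ne' hε0.ne']
    rw [thresholdTime, div_le_iff₀ (by positivity)] at ht
    linarith
  have hexp' : N * ε * exp (-2 * t * Δ) ≤ m * (1 - ε) := by
    rwa [le_div_iff₀' (by positivity)] at hexp
  have hn_le : n * (ε * exp (-2 * t * Δ)) ≤ N * (ε * exp (-2 * t * Δ)) :=
    mul_le_mul_of_nonneg_right hnN (by positivity)
  rw [le_div_iff₀ (by positivity)]
  linarith

lemma norm_div_sqrt_sum_norm_sq_mul_sq {ι : Type*} [Fintype ι] {c : ℂ} (hc : c ≠ 0)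
    {w : ι → ℝ} (hw : 0 < ∑ k, w k) :
    ‖c / (√(∑ k, ‖c‖ ^ 2 * w k) : ℂ)‖ ^ 2 = (∑ k, w k)⁻¹ := by
  rw [← mul_sum, norm_div, Complex.norm_real, norm_of_nonneg (sqrt_nonneg _), div_pow,
    sq_sqrt (by positivity)]
  field_simp

section ImaginaryTime

variable {ι : Type*} [Fintype ι] {lam : ι → ℝ} {l₀ : ℝ} {G : Finset ι}

lemma sum_exp_le_card_add_card_compl_mul_exp [DecidableEq ι] {Δ t : ℝ} (ht : 0 ≤ t)
    (hG : ∀ k ∈ G, lam k = l₀) (hgap : ∀ k ∉ G, l₀ + Δ ≤ lam k) :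
    ∑ k, exp (-2 * t * (lam k - l₀)) ≤ #G + #Gᶜ * exp (-2 * t * Δ) := by
  rw [← sum_add_sum_compl G]
  gcongr ?_ + ?_
  · exact (sum_le_card_nsmul G _ 1 fun k hk => by simp [hG k hk]).trans (by simp)
  · rw [← nsmul_eq_mul]
    refine sum_le_card_nsmul _ _ _ fun k hk => exp_le_exp.mpr ?_
    have := hgap k (mem_compl.mp hk)
    nlinarith

lemma sum_inv_sum_exp_eq_card_div (t : ℝ) (hG : ∀ j ∈ G, lam j = l₀) :
    ∑ j ∈ G, (∑ k, exp (-2 * t * (lam k - lam j)))⁻¹ =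
      #G / ∑ k, exp (-2 * t * (lam k - l₀)) := by
  rw [sum_congr rfl fun j hj => by rw [hG j hj], sum_const, nsmul_eq_mul, div_eq_mul_inv]

lemma card_div_add_mul_exp_le_sum_inv_sum_exp [DecidableEq ι] {Δ t : ℝ} (ht : 0 ≤ t) (hGne : G.Nonempty)
    (hG : ∀ k ∈ G, lam k = l₀) (hgap : ∀ k ∉ G, l₀ + Δ ≤ lam k) :
    #G / (#G + #Gᶜ * exp (-2 * t * Δ)) ≤ ∑ j ∈ G, (∑ k, exp (-2 * t * (lam k - lam j)))⁻¹ := by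
  have : Nonempty ι := hGne.to_type
  rw [sum_inv_sum_exp_eq_card_div t hG]
  exact div_le_div_of_nonneg_left (by positivity)
    (sum_pos (fun k _ => exp_pos _) univ_nonempty)
    (sum_exp_le_card_add_card_compl_mul_exp ht hG hgap)

end ImaginaryTime

theorem ite_combinatorial_threshold_time
    (Q μ : ℕ) (hμ : μ < 2 ^ Q) (hμpos : 0 < μ)
    (lam : Fin (2 ^ Q) → ℝ) (hmono : Monotone lam)
    (hground : ∀ k : Fin (2 ^ Q), (k : ℕ) < μ → lam k = lam ⟨0, Nat.pow_pos (n := Q) (by norm_num)⟩)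
    (Δ : ℝ) (hΔ : Δ = lam ⟨μ, hμ⟩ - lam ⟨0, Nat.pow_pos (n := Q) (by norm_num)⟩) (hΔpos : 0 < Δ)
    (α0 : Fin (2 ^ Q) → ℂ)
    (hα0 : ∀ j, α0 j = ((2 : ℝ) ^ (-(Q : ℝ) / 2) : ℝ))
    (α : ℝ → Fin (2 ^ Q) → ℂ)
    (hα : ∀ t j, α t j =
      α0 j / (Real.sqrt (∑ k, ‖α0 k‖ ^ 2 * Real.exp (-2 * t * (lam k - lam j))) : ℂ))
    (p : ℝ → ℝ)
    (hp : ∀ t, p t = ∑ j ∈ Finset.univ.filter fun j : Fin (2 ^ Q) => (j : ℕ) < μ, ‖α t j‖ ^ 2)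
    (ε : ℝ) (hε0 : 0 < ε) (hε1 : ε < 1) (hp0 : (μ : ℝ) / 2 ^ Q < ε) :
    ∀ t : ℝ, t ≥ ((Q : ℝ) * Real.log 2 - Real.log μ + Real.log ε - Real.log (1 - ε)) / (2 * Δ) →
      p t ≥ ε := by
  intro t ht
  rw [← log_pow] at ht
  change thresholdTime (2 ^ Q) μ ε Δ ≤ t at ht
  have hμR : (0 : ℝ) < μ := Nat.cast_pos.mpr hμpos
  have ht0 : 0 ≤ t := (thresholdTime_pos (by positivity) hμR hε1 hp0 hΔpos).le.trans ht
  set G := univ.filter fun j : Fin (2 ^ Q) => (j : ℕ) < μ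
  have hcard : #G = μ := by rw [Fin.card_filter_val_lt, min_eq_right hμ.le]
  have hcompl : (#Gᶜ : ℝ) ≤ 2 ^ Q := by exact_mod_cast (card_le_univ Gᶜ).trans_eq (Fintype.card_fin _)
  have hgap : ∀ k ∉ G, lam ⟨0, Nat.pow_pos (by norm_num)⟩ + Δ ≤ lam k := fun k hk => by
    have : lam ⟨μ, hμ⟩ ≤ lam k := hmono (Fin.le_iff_val_le_val.mpr (by simpa [G] using hk))
    linarith
  have hpt : p t = ∑ j ∈ G, (∑ k, exp (-2 * t * (lam k - lam j)))⁻¹ := by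
    rw [hp]
    refine sum_congr rfl fun j _ => ?_
    simp only [hα, hα0]
    exact norm_div_sqrt_sum_norm_sq_mul_sq (Complex.ofReal_ne_zero.mpr (by positivity))
      (sum_pos (fun k _ => exp_pos _) univ_nonempty)
  calc ε ≤ μ / (μ + #Gᶜ * exp (-2 * t * Δ)) :=
        le_div_add_mul_exp_of_thresholdTime_le (by positivity) hμR (by positivity) hcompl hε0 hε1
          hΔpos ht
    _ ≤ p t := hpt ▸ hcard ▸ card_div_add_mul_exp_le_sum_inv_sum_exp ht0
          ⟨⟨0, Nat.pow_pos (by norm_num)⟩, by simpa [G] using hμpos⟩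
          (fun k hk => hground k (by simpa [G] using hk)) hgap
end

section
/- The squared distance of the evolved state to its limit satisfies ‖ψ(t) − ψ(∞)‖² ≤ C e^{-2tΔ}/a³ for all t ≥ t₀, where ψ(∞) is the normalized projection of ψ(0) onto the ground eigenspace, a = ‖P₀ψ(0)‖², Δ is the energy gap, and C, t₀ are constants depending only on a. -/
/-!
Split `ψ₀ = u + w` with `u` its projection onto the ground eigenspace and `w ⊥ u`. The semigroup
`exp (-tH)` multiplies `u` by `e^{-tλ₀}`, while in an eigenbasis `w` only has components along
eigenvalues `≥ λ_μ`, so by Parseval `‖exp (-tH) w‖ ≤ e^{-tλ_μ} ‖w‖` for `t ≥ 0`. Hence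
`e^{tλ₀} exp (-tH) ψ₀` lies within `e^{-tΔ} ‖w‖` of `u`, and normalizing both vectors costs at most a
factor `2 / ‖u‖`. With `‖w‖² = 1 - a` this gives `‖ψ(t) - ψ(∞)‖² ≤ 4 e^{-2tΔ} (1 - a) / a`
for every `t ≥ 0`.
-/

open NormedSpace Module.End
open scoped InnerProductSpace

theorem NormedSpace.exp_apply_of_apply_eq_smul {𝕜 E : Type*} [RCLike 𝕜] [NormedAddCommGroup E]
    [NormedSpace 𝕜 E] [CompleteSpace E] {A : E →L[𝕜] E} {c : 𝕜} {v : E} (h : A v = c • v) :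
    exp A v = exp c • v := by
  have hpow (n : ℕ) : (A ^ n) v = c ^ n • v := by
    induction n with
    | zero => simp
    | succ n ih =>
      rw [pow_succ', ContinuousLinearMap.mul_def, ContinuousLinearMap.comp_apply, ih, map_smul, h,
        smul_smul, ← pow_succ]
  refine ((exp_series_hasSum_exp' (𝕂 := 𝕜) A).mapL (ContinuousLinearMap.apply 𝕜 E v)).unique ?_
  convert (exp_series_hasSum_exp' (𝕂 := 𝕜) c).smul_const v using 2 with n
  simp [hpow, smul_smul]

theorem exp_neg_smul_apply_of_mem_eigenspace {V : Type*} [NormedAddCommGroup V] [NormedSpace ℂ V]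
    [CompleteSpace V] {T : V →L[ℂ] V} {r : ℝ} {v : V}
    (hv : v ∈ eigenspace (T : V →ₗ[ℂ] V) (r : ℂ)) (t : ℝ) :
    exp ((-t : ℂ) • T) v = Real.exp (-t * r) • v := by
  have h : ((-t : ℂ) • T) v = ((-t * r : ℝ) : ℂ) • v := by
    rw [smul_apply, ← ContinuousLinearMap.coe_coe, mem_eigenspace_iff.mp hv, smul_smul]
    push_cast; rfl
  rw [exp_apply_of_apply_eq_smul h, ← Complex.exp_eq_exp_ℂ, ← Complex.ofReal_exp,
    Complex.coe_smul]

theorem OrthonormalBasis.norm_le_mul_of_forall_norm_inner_le {ι 𝕜 E : Type*} [Fintype ι]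
    [RCLike 𝕜] [NormedAddCommGroup E] [InnerProductSpace 𝕜 E] (b : OrthonormalBasis ι 𝕜 E)
    {x y : E} {c : ℝ} (hc : 0 ≤ c) (h : ∀ i, ‖⟪b i, x⟫_𝕜‖ ≤ c * ‖⟪b i, y⟫_𝕜‖) :
    ‖x‖ ≤ c * ‖y‖ := by
  rw [← pow_le_pow_iff_left₀ (norm_nonneg _) (by positivity) two_ne_zero, mul_pow,
    ← b.sum_sq_norm_inner_right x, ← b.sum_sq_norm_inner_right y, Finset.mul_sum]
  gcongr with i
  rw [← mul_pow]
  gcongr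
  exact h i

theorem norm_inv_norm_smul_sub_inv_norm_smul_le {E : Type*} [NormedAddCommGroup E]
    [NormedSpace ℝ E] (x : E) {y : E} (hy : y ≠ 0) :
    ‖‖x‖⁻¹ • x - ‖y‖⁻¹ • y‖ ≤ 2 * ‖x - y‖ / ‖y‖ := by
  rcases eq_or_ne x 0 with rfl | hx
  · simp [norm_smul, hy]
  have hx' : 0 < ‖x‖ := norm_pos_iff.mpr hx
  have hy' : 0 < ‖y‖ := norm_pos_iff.mpr hy
  have hsplit : ‖x‖⁻¹ • x - ‖y‖⁻¹ • y = ‖y‖⁻¹ • (x - y) + (‖x‖⁻¹ - ‖y‖⁻¹) • x := by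
    rw [smul_sub, sub_smul]; abel
  have hscale : ‖(‖x‖⁻¹ - ‖y‖⁻¹) • x‖ = |‖y‖ - ‖x‖| / ‖y‖ := by
    rw [norm_smul, Real.norm_eq_abs, inv_sub_inv hx'.ne' hy'.ne', abs_div,
      abs_of_pos (mul_pos hx' hy')]
    field_simp
  calc ‖‖x‖⁻¹ • x - ‖y‖⁻¹ • y‖
      ≤ ‖‖y‖⁻¹ • (x - y)‖ + ‖(‖x‖⁻¹ - ‖y‖⁻¹) • x‖ := hsplit ▸ norm_add_le _ _
    _ ≤ ‖x - y‖ / ‖y‖ + ‖x - y‖ / ‖y‖ := by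
      rw [hscale, norm_smul, norm_inv, norm_norm, inv_mul_eq_div]
      gcongr
      exact (abs_norm_sub_norm_le y x).trans_eq (norm_sub_rev y x)
    _ = 2 * ‖x - y‖ / ‖y‖ := by ring

theorem inv_norm_smul_smul_of_pos {E : Type*} [NormedAddCommGroup E] [NormedSpace ℝ E]
    {c : ℝ} (hc : 0 < c) (x : E) : ‖c • x‖⁻¹ • c • x = ‖x‖⁻¹ • x := by
  rw [norm_smul, Real.norm_of_nonneg hc.le, smul_smul, mul_inv, mul_right_comm,
    inv_mul_cancel₀ hc.ne', one_mul]

section GroundState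

variable {V : Type*} [NormedAddCommGroup V] [InnerProductSpace ℂ V] [FiniteDimensional ℂ V]
  {T : V →L[ℂ] V} {lam0 lam : ℝ}

theorem IsSelfAdjoint.norm_exp_neg_smul_apply_le_of_mem_orthogonal (hT : IsSelfAdjoint T)
    (hgap : ∀ r : ℝ, HasEigenvalue (T : V →ₗ[ℂ] V) (r : ℂ) → r = lam0 ∨ lam ≤ r)
    {w : V} (hw : w ∈ (eigenspace (T : V →ₗ[ℂ] V) (lam0 : ℂ))ᗮ) {t : ℝ} (ht : 0 ≤ t) :
    ‖NormedSpace.exp ((-t : ℂ) • T) w‖ ≤ Real.exp (-t * lam) * ‖w‖ := by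
  have hT' := hT.isSymmetric
  have hexp : IsSelfAdjoint (NormedSpace.exp ((-t : ℂ) • T)) := by
    rw [← Complex.ofReal_neg, Complex.coe_smul]
    exact ((IsSelfAdjoint.all (-t)).smul hT).exp
  let b := hT'.eigenvectorBasis rfl
  refine b.norm_le_mul_of_forall_norm_inner_le (Real.exp_pos _).le fun i => ?_
  set μ := hT'.eigenvalues rfl i
  have hb : b i ∈ eigenspace (T : V →ₗ[ℂ] V) (μ : ℂ) :=
    (hT'.hasEigenvector_eigenvectorBasis rfl i).1
  rw [← ContinuousLinearMap.coe_coe, ← hexp.isSymmetric, ContinuousLinearMap.coe_coe,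
    exp_neg_smul_apply_of_mem_eigenspace hb, ← Complex.coe_smul, inner_smul_left, norm_mul,
    Complex.conj_ofReal, Complex.norm_real, Real.norm_of_nonneg (Real.exp_pos _).le]
  rcases hgap μ (hT'.hasEigenvalue_eigenvalues rfl i) with hμ | hμ
  · rw [Submodule.inner_right_of_mem_orthogonal (hμ ▸ hb) hw]
    simp
  · exact mul_le_mul_of_nonneg_right (Real.exp_le_exp.mpr (by nlinarith)) (norm_nonneg _)

theorem IsSelfAdjoint.norm_exp_mul_smul_exp_neg_smul_add_sub_le (hT : IsSelfAdjoint T)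
    (hgap : ∀ r : ℝ, HasEigenvalue (T : V →ₗ[ℂ] V) (r : ℂ) → r = lam0 ∨ lam ≤ r)
    {u w : V} (hu : u ∈ eigenspace (T : V →ₗ[ℂ] V) (lam0 : ℂ))
    (hw : w ∈ (eigenspace (T : V →ₗ[ℂ] V) (lam0 : ℂ))ᗮ) {t : ℝ} (ht : 0 ≤ t) :
    ‖Real.exp (t * lam0) • NormedSpace.exp ((-t : ℂ) • T) (u + w) - u‖ ≤
      Real.exp (-t * (lam - lam0)) * ‖w‖ := by
  rw [map_add, exp_neg_smul_apply_of_mem_eigenspace hu, smul_add, smul_smul, ← Real.exp_add,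
    show t * lam0 + -t * lam0 = 0 by ring, Real.exp_zero, one_smul, add_sub_cancel_left,
    norm_smul, Real.norm_of_nonneg (Real.exp_pos _).le,
    show -t * (lam - lam0) = t * lam0 + -t * lam by ring, Real.exp_add, mul_assoc]
  gcongr
  exact hT.norm_exp_neg_smul_apply_le_of_mem_orthogonal hgap hw ht

end GroundState

theorem ite_convergence_rate_general
    {V : Type*} [NormedAddCommGroup V] [InnerProductSpace ℂ V] [FiniteDimensional ℂ V]
    (H : V →L[ℂ] V) (hH : IsSelfAdjoint H)
    (lam0 lamμ : ℝ)
    (hgap : ∀ r : ℝ, Module.End.HasEigenvalue (H : V →ₗ[ℂ] V) (r : ℂ) →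
      r = lam0 ∨ lamμ ≤ r)
    (Δ : ℝ) (hΔ : Δ = lamμ - lam0)
    (P0 : V → V)
    (hP0 : ∀ v, P0 v =
      ((Module.End.eigenspace (H : V →ₗ[ℂ] V) (lam0 : ℂ)).orthogonalProjectionOnto v : V))
    (ψ0 : V) (hψ0 : ‖ψ0‖ = 1)
    (a : ℝ) (ha : a = ‖P0 ψ0‖ ^ 2) (hapos : 0 < a)
    (ψ : ℝ → V)
    (hψ : ∀ t, ψ t = ‖exp ((-t : ℂ) • H) ψ0‖⁻¹ • (exp ((-t : ℂ) • H) ψ0))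
    (ψinf : V) (hψinf : ψinf = ‖P0 ψ0‖⁻¹ • P0 ψ0) :
    ∃ C t0 : ℝ, 0 < C ∧ ∀ t ≥ t0,
      ‖ψ t - ψinf‖ ^ 2 ≤ C * Real.exp (-2 * t * Δ) / a ^ 3 := by
  set K := eigenspace (H : V →ₗ[ℂ] V) (lam0 : ℂ)
  set u := K.starProjection ψ0
  set w := Kᗮ.starProjection ψ0
  have hPu : P0 ψ0 = u := (hP0 ψ0).trans (K.starProjection_apply ψ0).symm
  rw [hPu] at ha hψinf
  have hu0 : u ≠ 0 := fun h => by simp [h] at ha; linarith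
  have hpyth : a + ‖w‖ ^ 2 = 1 := by
    rw [ha, ← K.norm_sq_eq_add_norm_sq_starProjection, hψ0, one_pow]
  have hψ0uw : ψ0 = u + w := (K.starProjection_add_starProjection_orthogonal ψ0).symm
  refine ⟨4, 0, four_pos, fun t ht => ?_⟩
  have hdist : ‖ψ t - ψinf‖ ≤ 2 * (Real.exp (-t * Δ) * ‖w‖) / ‖u‖ := by
    rw [hψ, hψinf, ← inv_norm_smul_smul_of_pos (Real.exp_pos (t * lam0))]
    refine (norm_inv_norm_smul_sub_inv_norm_smul_le _ hu0).trans ?_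
    rw [hΔ, hψ0uw]
    gcongr
    exact hH.norm_exp_mul_smul_exp_neg_smul_add_sub_le hgap (K.starProjection_apply_mem ψ0)
      (Kᗮ.starProjection_apply_mem ψ0) ht
  calc ‖ψ t - ψinf‖ ^ 2 ≤ (2 * (Real.exp (-t * Δ) * ‖w‖) / ‖u‖) ^ 2 := by gcongr
    _ = 4 * Real.exp (-2 * t * Δ) * (1 - a) / a := by
      rw [div_pow, mul_pow, mul_pow, ← Real.exp_nat_mul, ← ha, ← hpyth]
      ring_nf
    _ ≤ 4 * Real.exp (-2 * t * Δ) / a := by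
      gcongr ?_ / _
      exact mul_le_of_le_one_right (by positivity) (by linarith)
    _ ≤ 4 * Real.exp (-2 * t * Δ) / a ^ 3 := by
      gcongr
      exact pow_le_of_le_one hapos.le (by nlinarith) three_ne_zero

theorem ite_convergence_rate
    {V : Type*} [NormedAddCommGroup V] [InnerProductSpace ℂ V] [FiniteDimensional ℂ V]
    (H : V →L[ℂ] V) (hH : IsSelfAdjoint H)
    (lam0 lamμ : ℝ)
    (h0 : Module.End.HasEigenvalue (H : V →ₗ[ℂ] V) (lam0 : ℂ))
    (hμev : Module.End.HasEigenvalue (H : V →ₗ[ℂ] V) (lamμ : ℂ))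
    (hgap : ∀ r : ℝ, Module.End.HasEigenvalue (H : V →ₗ[ℂ] V) (r : ℂ) →
      r = lam0 ∨ lamμ ≤ r)
    (Δ : ℝ) (hΔ : Δ = lamμ - lam0) (hΔpos : 0 < Δ)
    (P0 : V → V)
    (hP0 : ∀ v, P0 v =
      ((Module.End.eigenspace (H : V →ₗ[ℂ] V) (lam0 : ℂ)).orthogonalProjectionOnto v : V))
    (ψ0 : V) (hψ0 : ‖ψ0‖ = 1)
    (a : ℝ) (ha : a = ‖P0 ψ0‖ ^ 2) (hapos : 0 < a)
    (ψ : ℝ → V)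
    (hψ : ∀ t, ψ t = ‖exp ((-t : ℂ) • H) ψ0‖⁻¹ • (exp ((-t : ℂ) • H) ψ0))
    (ψinf : V) (hψinf : ψinf = ‖P0 ψ0‖⁻¹ • P0 ψ0) :
    ∃ C t0 : ℝ, 0 < C ∧ ∀ t ≥ t0,
      ‖ψ t - ψinf‖ ^ 2 ≤ C * Real.exp (-2 * t * Δ) / a ^ 3 :=
  ite_convergence_rate_general H hH lam0 lamμ hgap Δ hΔ P0 hP0 ψ0 hψ0 a ha hapos ψ hψ ψinf hψinf
end

section
/- For the fidelity function f(t) = Σ_{j<μ}|α_j(t)|², f is monotonically non-decreasing in t and converges to 1 as t → ∞ provided f(0) > 0. -/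
open Finset Real Filter Topology

theorem ite_fidelity_monotone_tendsto_one
    (N μ : ℕ) (hμ : μ < N + 1) (hμpos : 0 < μ)
    (lam : Fin (N + 1) → ℝ) (hmono : Monotone lam)
    (hground : ∀ k : Fin (N + 1), (k : ℕ) < μ → lam k = lam 0)
    (hgap : lam 0 < lam ⟨μ, hμ⟩)
    (α0 : Fin (N + 1) → ℂ) (hnorm : ∑ k, ‖α0 k‖ ^ 2 = 1)
    (α : ℝ → Fin (N + 1) → ℂ)
    (hα : ∀ t j, α t j =
      α0 j / (Real.sqrt (∑ k, ‖α0 k‖ ^ 2 * Real.exp (-2 * t * (lam k - lam j))) : ℂ))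
    (f : ℝ → ℝ)
    (hf : ∀ t, f t = ∑ j ∈ Finset.univ.filter fun j : Fin (N + 1) => (j : ℕ) < μ, ‖α t j‖ ^ 2)
    (hf0 : 0 < f 0) :
    MonotoneOn f (Set.Ici (0 : ℝ)) ∧ Tendsto f atTop (𝓝 1) := by
  have hd : ∀ k : Fin (N + 1), 0 ≤ lam k - lam 0 :=
    fun k => sub_nonneg.2 (hmono k.zero_le)
  set A : ℝ := ∑ j ∈ Finset.univ.filter (fun j : Fin (N + 1) => (j : ℕ) < μ), ‖α0 j‖ ^ 2 with hA
  set S : ℝ → ℝ := fun t => ∑ k, ‖α0 k‖ ^ 2 * Real.exp (-2 * t * (lam k - lam 0)) with hSdef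
  have hS0 : S 0 = 1 := by
    simp only [hSdef]
    simpa using hnorm
  have hSnonneg : ∀ t, 0 ≤ S t := fun t =>
    Finset.sum_nonneg fun k _ => mul_nonneg (sq_nonneg _) (Real.exp_pos _).le
  have hfA : ∀ t, f t = A / S t := by
    intro t
    rw [hf t]
    have hterm : ∀ j ∈ Finset.univ.filter (fun j : Fin (N + 1) => (j : ℕ) < μ),
        ‖α t j‖ ^ 2 = ‖α0 j‖ ^ 2 / S t := by
      intro j hj
      have hjμ : (j : ℕ) < μ := (Finset.mem_filter.1 hj).2
      have hsum : (∑ k, ‖α0 k‖ ^ 2 * Real.exp (-2 * t * (lam k - lam j))) = S t := by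
        simp [hSdef, hground j hjμ]
      rw [hα t j, hsum, norm_div, Complex.norm_real, div_pow, Real.norm_eq_abs, sq_abs,
        Real.sq_sqrt (hSnonneg t)]
    rw [Finset.sum_congr rfl hterm, ← Finset.sum_div]
  have hApos : 0 < A := by
    have := hfA 0
    rw [hS0, div_one] at this
    linarith [hf0, this]
  have hASle : ∀ t, A ≤ S t := by
    intro t
    have hAeq : A = ∑ j ∈ Finset.univ.filter (fun j : Fin (N + 1) => (j : ℕ) < μ),
        ‖α0 j‖ ^ 2 * Real.exp (-2 * t * (lam j - lam 0)) := by
      refine Finset.sum_congr rfl fun j hj => ?_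
      rw [hground j (Finset.mem_filter.1 hj).2]
      simp
    rw [hAeq]
    exact Finset.sum_le_sum_of_subset_of_nonneg (Finset.filter_subset _ _)
      (fun k _ _ => mul_nonneg (sq_nonneg _) (Real.exp_pos _).le)
  have hSpos : ∀ t, 0 < S t := fun t => lt_of_lt_of_le hApos (hASle t)
  constructor
  · intro s _ t _ hst
    rw [hfA s, hfA t]
    have hSle : S t ≤ S s := by
      refine Finset.sum_le_sum fun k _ => ?_
      refine mul_le_mul_of_nonneg_left (Real.exp_le_exp.2 ?_) (sq_nonneg _)
      nlinarith [hd k]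
    exact div_le_div_of_nonneg_left hApos.le (hSpos t) hSle
  · have hStend : Tendsto S atTop (𝓝 A) := by
      have h1 : Tendsto S atTop
          (𝓝 (∑ k : Fin (N + 1), if (k : ℕ) < μ then ‖α0 k‖ ^ 2 else 0)) := by
        refine tendsto_finset_sum _ fun k _ => ?_
        by_cases hk : (k : ℕ) < μ
        · simp only [hk, if_true, hground k hk, sub_self, mul_zero, Real.exp_zero, mul_one]
          exact tendsto_const_nhds
        · simp only [hk, if_false]
          have hdk : 0 < lam k - lam 0 := by
            have hμk : (⟨μ, hμ⟩ : Fin (N + 1)) ≤ k := by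
              simpa [Fin.le_def] using Nat.le_of_not_lt hk
            have := hmono hμk
            linarith
          have hlin : Tendsto (fun t : ℝ => -2 * t * (lam k - lam 0)) atTop atBot := by
            have h2 : Tendsto (fun t : ℝ => (2 * (lam k - lam 0)) * t) atTop atTop :=
              Tendsto.const_mul_atTop (by positivity) tendsto_id
            have := tendsto_neg_atTop_atBot.comp h2
            refine this.congr fun t => by simp only [Function.comp]; ring
          have hexp : Tendsto (fun t : ℝ => ‖α0 k‖ ^ 2 *
              Real.exp (-2 * t * (lam k - lam 0))) atTop (𝓝 (‖α0 k‖ ^ 2 * 0)) :=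
            (Real.tendsto_exp_atBot.comp hlin).const_mul _
          simpa using hexp
      have hAeq : (∑ k : Fin (N + 1), if (k : ℕ) < μ then ‖α0 k‖ ^ 2 else 0) = A := by
        rw [hA, Finset.sum_filter]
      rwa [hAeq] at h1
    have hlim : Tendsto f atTop (𝓝 (A / A)) := by
      have := (tendsto_const_nhds (x := A) (f := atTop (α := ℝ))).div hStend hApos.ne'
      exact this.congr fun t => (hfA t).symm
    rwa [div_self hApos.ne'] at hlim
end
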